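/- The Apéry set of S is β-rectangular (Ap(S) = B) if and only if f + m = Σ_{i=2}^ν β_i g_i, where f is the Frobenius number and m the multiplicity of S. -/

import Mathlib

open Finset

/-- `S` is a numerical semigroup: a submonoid of `(ℕ, +)` with finite complement. -/
def IsNumSgp (S : Set ℕ) : Prop :=
  0 ∈ S ∧ (∀ a ∈ S, ∀ b ∈ S, a + b ∈ S) ∧ (Sᶜ : Set ℕ).Finite

/-- `s` belongs to the Apéry set of `S` with respect to `m`:
`s ∈ S` and `s - m ∉ S` (i.e. no `u ∈ S` with `u + m = s`). -/
def InApery (S : Set ℕ) (m s : ℕ) : Prop :=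
  s ∈ S ∧ ∀ u ∈ S, u + m ≠ s

def AperySet (S : Set ℕ) (m : ℕ) : Set ℕ := {s | InApery S m s}

/-- `ordS S s` is the largest `h` such that `s` is a sum of `h` nonzero elements of `S`. -/
noncomputable def ordS (S : Set ℕ) (s : ℕ) : ℕ :=
  sSup {h : ℕ | ∃ f : Fin h → ℕ, (∀ j, f j ∈ S ∧ f j ≠ 0) ∧ ∑ j, f j = s}

/-- `g` generates `S`. -/
def Generates (S : Set ℕ) {ν : ℕ} (g : Fin ν → ℕ) : Prop :=
  ∀ s, s ∈ S ↔ ∃ lam : Fin ν → ℕ, ∑ i, lam i * g i = s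

/-- `g` is a minimal generating system of `S`: it generates `S`
and no `g i` is generated by the remaining generators. -/
def MinimalGen (S : Set ℕ) {ν : ℕ} (g : Fin ν → ℕ) : Prop :=
  Generates S g ∧ ∀ i, ¬ ∃ lam : Fin ν → ℕ, lam i = 0 ∧ ∑ j, lam j * g j = g i

/-- `lam` is a maximal representation of `s`: the coefficient sum equals `ordS S s`. -/
def IsMaxRep (S : Set ℕ) {ν : ℕ} (g : Fin ν → ℕ) (lam : Fin ν → ℕ) (s : ℕ) : Prop :=
  ∑ i, lam i * g i = s ∧ ∑ i, lam i = ordS S s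

/-- `s` has a unique maximal representation. -/
def UniqueMaxRep (S : Set ℕ) {ν : ℕ} (g : Fin ν → ℕ) (s : ℕ) : Prop :=
  ∃! lam : Fin ν → ℕ, IsMaxRep S g lam s

/-- `β_i = max {h | h g_i ∈ Ap(S) and ord(h g_i) = h}`. -/
noncomputable def betaN (S : Set ℕ) (m : ℕ) {ν : ℕ} (g : Fin ν → ℕ) (i : Fin ν) : ℕ :=
  sSup {h : ℕ | InApery S m (h * g i) ∧ ordS S (h * g i) = h}

/-- `γ_i = max {h | h g_i ∈ Ap(S), ord(h g_i) = h and h g_i has a unique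
maximal representation}`. -/
noncomputable def gammaN (S : Set ℕ) (m : ℕ) {ν : ℕ} (g : Fin ν → ℕ) (i : Fin ν) : ℕ :=
  sSup {h : ℕ | InApery S m (h * g i) ∧ ordS S (h * g i) = h ∧ UniqueMaxRep S g (h * g i)}

/-- `B = {Σ_{i≥2} λ_i g_i : 0 ≤ λ_i ≤ β_i}`. -/
def Bset (S : Set ℕ) (m : ℕ) {ν : ℕ} [NeZero ν] (g : Fin ν → ℕ) : Set ℕ :=
  {s | ∃ lam : Fin ν → ℕ, lam 0 = 0 ∧ (∀ i, lam i ≤ betaN S m g i) ∧ ∑ i, lam i * g i = s}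

/-- `Γ = {Σ_{i≥2} λ_i g_i : 0 ≤ λ_i ≤ γ_i}`. -/
def GammaSet (S : Set ℕ) (m : ℕ) {ν : ℕ} [NeZero ν] (g : Fin ν → ℕ) : Set ℕ :=
  {s | ∃ lam : Fin ν → ℕ, lam 0 = 0 ∧ (∀ i, lam i ≤ gammaN S m g i) ∧ ∑ i, lam i * g i = s}

/-- `s ⪯_M t`. -/
def predM (S : Set ℕ) (s t : ℕ) : Prop :=
  ∃ u ∈ S, s + u = t ∧ ordS S s + ordS S u = ordS S t

/-! A maximal representation `∑ λᵢ gᵢ` of an element of `Ap(S)` has no summand `m`, and each part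
`λᵢ gᵢ` is again an element of `Ap(S)` whose maximal representation is `λᵢ gᵢ` itself, so
`λᵢ ≤ βᵢ`: always `Ap(S) ⊆ B`. As `Ap(S)` is closed under summands, the equation
`f + m = ∑ βᵢ gᵢ` makes every element of `B` a summand of an element of `Ap(S)`. Conversely, if
`Ap(S) = B`, the largest elements `f + m` and `∑ βᵢ gᵢ` of the two sets coincide. -/

section OrdS

variable {S : Set ℕ} {s : ℕ}

lemma exists_fin_iff_exists_multiset {h : ℕ} :
    (∃ F : Fin h → ℕ, (∀ j, F j ∈ S ∧ F j ≠ 0) ∧ ∑ j, F j = s) ↔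
      ∃ M : Multiset ℕ, (∀ x ∈ M, x ∈ S ∧ x ≠ 0) ∧ Multiset.card M = h ∧ M.sum = s := by
  constructor
  · rintro ⟨F, hF, rfl⟩
    refine ⟨List.ofFn F, ?_, by simp, by simp [List.sum_ofFn]⟩
    simp only [Multiset.mem_coe, List.mem_ofFn]
    rintro _ ⟨j, rfl⟩
    exact hF j
  · rintro ⟨M, hM, rfl, rfl⟩
    obtain ⟨l, rfl⟩ : ∃ l : List ℕ, (l : Multiset ℕ) = M := Quot.exists_rep M
    exact ⟨l.get, fun j => hM _ (List.get_mem l j), Fin.sum_univ_getElem l⟩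

lemma ordS_eq_sSup : ordS S s = sSup {h | ∃ M : Multiset ℕ,
    (∀ x ∈ M, x ∈ S ∧ x ≠ 0) ∧ Multiset.card M = h ∧ M.sum = s} := by
  simp only [ordS, exists_fin_iff_exists_multiset]

lemma bddAbove_card_multiset : BddAbove {h | ∃ M : Multiset ℕ,
    (∀ x ∈ M, x ∈ S ∧ x ≠ 0) ∧ Multiset.card M = h ∧ M.sum = s} := by
  refine ⟨s, ?_⟩
  rintro _ ⟨M, hM, rfl, rfl⟩
  simpa using Multiset.card_nsmul_le_sum fun x hx => Nat.one_le_iff_ne_zero.2 (hM x hx).2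

lemma card_le_ordS {M : Multiset ℕ} (hM : ∀ x ∈ M, x ∈ S ∧ x ≠ 0) :
    Multiset.card M ≤ ordS S M.sum := by
  rw [ordS_eq_sSup]
  exact le_csSup bddAbove_card_multiset ⟨M, hM, rfl, rfl⟩

lemma exists_multiset_card_eq_ordS (hs : s ∈ S) : ∃ M : Multiset ℕ,
    (∀ x ∈ M, x ∈ S ∧ x ≠ 0) ∧ Multiset.card M = ordS S s ∧ M.sum = s := by
  rw [ordS_eq_sSup]
  refine Nat.sSup_mem ?_ bddAbove_card_multiset
  by_cases hs0 : s = 0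
  · exact ⟨0, 0, by simp, rfl, by simp [hs0]⟩
  · exact ⟨1, {s}, by simp [hs, hs0], rfl, by simp⟩

lemma ordS_add_ordS_le {a b : ℕ} (ha : a ∈ S) (hb : b ∈ S) :
    ordS S a + ordS S b ≤ ordS S (a + b) := by
  obtain ⟨A, hA, hAcard, rfl⟩ := exists_multiset_card_eq_ordS ha
  obtain ⟨B, hB, hBcard, rfl⟩ := exists_multiset_card_eq_ordS hb
  have hAB : ∀ x ∈ A + B, x ∈ S ∧ x ≠ 0 := by
    simp only [Multiset.mem_add]
    rintro x (hx | hx)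
    exacts [hA x hx, hB x hx]
  simpa [hAcard, hBcard] using card_le_ordS hAB

end OrdS

section Generators

variable {S : Set ℕ} {ν : ℕ} {g : Fin ν → ℕ} {s : ℕ}

lemma Generates.sum_mem (hgen : Generates S g) (lam : Fin ν → ℕ) : ∑ i, lam i * g i ∈ S :=
  (hgen _).2 ⟨lam, rfl⟩

lemma Generates.mem (hgen : Generates S g) (i : Fin ν) : g i ∈ S := by
  simpa [Pi.single_apply] using hgen.sum_mem (Pi.single i 1)

lemma sum_mul_eq_add_tsub {lam ρ : Fin ν → ℕ} (h : ρ ≤ lam) :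
    ∑ i, lam i * g i = ∑ i, ρ i * g i + ∑ i, (lam - ρ) i * g i := by
  conv_lhs => rw [← add_tsub_cancel_of_le h]
  simp only [Pi.add_apply, add_mul, sum_add_distrib]

lemma sum_le_ordS (hgen : Generates S g) (hpos : ∀ i, g i ≠ 0) (lam : Fin ν → ℕ) :
    ∑ i, lam i ≤ ordS S (∑ i, lam i * g i) := by
  have hM : ∀ x ∈ ∑ i, Multiset.replicate (lam i) (g i), x ∈ S ∧ x ≠ 0 := by
    intro x hx
    obtain ⟨i, -, hi⟩ := Multiset.mem_sum.1 hx
    rw [Multiset.eq_of_mem_replicate hi]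
    exact ⟨hgen.mem i, hpos i⟩
  simpa [Multiset.card_sum, Multiset.sum_sum] using card_le_ordS hM

lemma exists_sum_mul_eq_multiset_sum (hgen : Generates S g) (M : Multiset ℕ)
    (hM : ∀ x ∈ M, x ∈ S ∧ x ≠ 0) :
    ∃ lam : Fin ν → ℕ, ∑ i, lam i * g i = M.sum ∧ Multiset.card M ≤ ∑ i, lam i := by
  induction M using Multiset.induction_on with
  | empty => exact ⟨0, by simp, by simp⟩
  | cons x M ih =>
    obtain ⟨hxS, hx0⟩ := hM x (Multiset.mem_cons_self x M)
    obtain ⟨lam, hlam, hcard⟩ := ih fun y hy => hM y (Multiset.mem_cons_of_mem hy)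
    obtain ⟨μ, rfl⟩ := (hgen x).1 hxS
    have hμ : 1 ≤ ∑ i, μ i := by
      by_contra! h
      simp_all
    refine ⟨μ + lam, ?_, ?_⟩
    · simp [add_mul, sum_add_distrib, hlam]
    · simp only [Multiset.card_cons, Pi.add_apply, sum_add_distrib]
      omega

lemma exists_isMaxRep (hgen : Generates S g) (hpos : ∀ i, g i ≠ 0) (hs : s ∈ S) :
    ∃ lam, IsMaxRep S g lam s := by
  obtain ⟨M, hM, hcard, rfl⟩ := exists_multiset_card_eq_ordS hs
  obtain ⟨lam, hlam, hle⟩ := exists_sum_mul_eq_multiset_sum hgen M hM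
  refine ⟨lam, hlam, le_antisymm ?_ (hcard ▸ hle)⟩
  simpa [hlam] using sum_le_ordS hgen hpos lam

lemma IsMaxRep.of_le (hgen : Generates S g) (hpos : ∀ i, g i ≠ 0) {lam ρ : Fin ν → ℕ}
    (hlam : IsMaxRep S g lam s) (h : ρ ≤ lam) : IsMaxRep S g ρ (∑ i, ρ i * g i) := by
  refine ⟨rfl, le_antisymm (sum_le_ordS hgen hpos ρ) ?_⟩
  have hsplit : ∑ i, lam i = ∑ i, ρ i + ∑ i, (lam - ρ) i := by
    simpa using sum_mul_eq_add_tsub (g := fun _ => 1) h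
  have hsuper := ordS_add_ordS_le (hgen.sum_mem ρ) (hgen.sum_mem (lam - ρ))
  rw [← sum_mul_eq_add_tsub h, hlam.1, ← hlam.2] at hsuper
  have := sum_le_ordS hgen hpos (lam - ρ)
  omega

end Generators

section Apery

variable {S : Set ℕ} {m s f : ℕ}

lemma InApery.of_add (hadd : ∀ a ∈ S, ∀ b ∈ S, a + b ∈ S) {a b : ℕ} (ha : a ∈ S) (hb : b ∈ S)
    (h : InApery S m (a + b)) : InApery S m a :=
  ⟨ha, fun u hu hum => h.2 (u + b) (hadd u hu b hb) (by omega)⟩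

lemma InApery.le_frobenius_add (hfmax : ∀ n, f < n → n ∈ S) (hs : InApery S m s) : s ≤ f + m := by
  by_contra! h
  exact hs.2 (s - m) (hfmax _ (by omega)) (by omega)

lemma inApery_frobenius_add (hf : f ∉ S) (hfmax : ∀ n, f < n → n ∈ S) (hm : 0 < m) :
    InApery S m (f + m) :=
  ⟨hfmax _ (by omega), fun u hu hum => hf (by rwa [← Nat.add_right_cancel hum])⟩

variable {ν : ℕ} {g : Fin ν → ℕ}

lemma bddAbove_betaN_set (hfmax : ∀ n, f < n → n ∈ S) (hpos : ∀ i, g i ≠ 0) (i : Fin ν) :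
    BddAbove {h : ℕ | InApery S m (h * g i) ∧ ordS S (h * g i) = h} :=
  ⟨f + m, fun h hh => (Nat.le_mul_of_pos_right h (Nat.pos_of_ne_zero (hpos i))).trans
    (hh.1.le_frobenius_add hfmax)⟩

lemma IsMaxRep.le_betaN (hgen : Generates S g) (hpos : ∀ i, g i ≠ 0)
    (hadd : ∀ a ∈ S, ∀ b ∈ S, a + b ∈ S) (hfmax : ∀ n, f < n → n ∈ S) {lam : Fin ν → ℕ}
    (hlam : IsMaxRep S g lam s) (hs : InApery S m s) (i : Fin ν) :
    lam i ≤ betaN S m g i := by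
  have hsingle : Pi.single i (lam i) ≤ lam := fun j => by
    rcases eq_or_ne j i with rfl | hj <;> simp [*]
  have hsum : ∑ j, (Pi.single i (lam i) : Fin ν → ℕ) j * g j = lam i * g i := by
    simp [Pi.single_apply]
  have hord := (hlam.of_le hgen hpos hsingle).2
  rw [hsum] at hord
  have hap : InApery S m (lam i * g i) := by
    rw [hlam.1.symm, sum_mul_eq_add_tsub hsingle, hsum] at hs
    exact hs.of_add hadd (hsum ▸ hgen.sum_mem _) (hgen.sum_mem _)
  exact le_csSup (bddAbove_betaN_set hfmax hpos i) ⟨hap, by simpa using hord.symm⟩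

lemma InApery.coeff_eq_zero (hgen : Generates S g) {lam : Fin ν → ℕ} {i : Fin ν}
    (h : InApery S (g i) (∑ j, lam j * g j)) : lam i = 0 := by
  by_contra hi
  have hsingle : Pi.single i (1 : ℕ) ≤ lam := fun j => by
    rcases eq_or_ne j i with rfl | hj <;> simp [*, Nat.one_le_iff_ne_zero]
  refine h.2 _ (hgen.sum_mem (lam - Pi.single i 1)) ?_
  rw [sum_mul_eq_add_tsub hsingle]
  simp [Pi.single_apply, add_comm]

end Apery

section Rectangular

variable {S : Set ℕ} {ν : ℕ} [NeZero ν] {g : Fin ν → ℕ} {m s : ℕ}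

lemma mem_bset_iff : s ∈ Bset S m g ↔
    ∃ lam ≤ Function.update (betaN S m g) 0 0, ∑ i, lam i * g i = s := by
  simp only [Bset, le_update_iff, nonpos_iff_eq_zero]
  constructor
  · rintro ⟨lam, h0, hle, hs⟩
    exact ⟨lam, ⟨h0, fun j _ => hle j⟩, hs⟩
  · rintro ⟨lam, ⟨h0, hle⟩, hs⟩
    refine ⟨lam, h0, fun j => ?_, hs⟩
    rcases eq_or_ne j 0 with rfl | hj
    exacts [h0 ▸ Nat.zero_le _, hle j hj]

lemma aperySet_subset_bset {f : ℕ} (hgen : Generates S g) (hpos : ∀ i, g i ≠ 0)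
    (hadd : ∀ a ∈ S, ∀ b ∈ S, a + b ∈ S) (hfmax : ∀ n, f < n → n ∈ S) :
    AperySet S (g 0) ⊆ Bset S (g 0) g := by
  intro s hs
  obtain ⟨lam, hlam⟩ := exists_isMaxRep hgen hpos hs.1
  have h0 : lam 0 = 0 := InApery.coeff_eq_zero hgen (hlam.1 ▸ hs)
  exact ⟨lam, h0, hlam.le_betaN hgen hpos hadd hfmax hs, hlam.1⟩

lemma sum_update_zero_mul (w : Fin ν → ℕ) :
    ∑ i, Function.update w 0 0 i * g i = ∑ i ∈ univ.erase 0, w i * g i := by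
  rw [← Finset.sum_erase univ (f := fun i => Function.update w 0 0 i * g i) (a := 0)
    (by simp)]
  exact sum_congr rfl fun i hi => by rw [Function.update_of_ne (ne_of_mem_erase hi)]

end Rectangular

theorem betaRect_iff_frobenius_general (S : Set ℕ) {ν : ℕ} [NeZero ν] (g : Fin ν → ℕ)
    (hS : IsNumSgp S) (hgen : MinimalGen S g) (hmono : StrictMono g)
    (hmpos : 0 < g 0)
    (f : ℕ) (hf : f ∉ S) (hfmax : ∀ n, f < n → n ∈ S) :
    AperySet S (g 0) = Bset S (g 0) g ↔
      f + g 0 = ∑ i ∈ Finset.univ.erase 0, betaN S (g 0) g i * g i := by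
  have hadd := hS.2.1
  have hpos : ∀ i, g i ≠ 0 := fun i =>
    (hmpos.trans_le (hmono.monotone (Fin.zero_le i))).ne'
  have hfm : InApery S (g 0) (f + g 0) := inApery_frobenius_add hf hfmax hmpos
  set β := Function.update (betaN S (g 0) g) 0 0
  rw [← sum_update_zero_mul]
  constructor
  · intro hAB
    obtain ⟨lam, hle, hsum⟩ := mem_bset_iff.1 (hAB ▸ hfm : f + g 0 ∈ Bset S (g 0) g)
    have hβ : ∑ i, β i * g i ∈ AperySet S (g 0) := hAB ▸ mem_bset_iff.2 ⟨β, le_rfl, rfl⟩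
    refine le_antisymm ?_ (hβ.le_frobenius_add hfmax)
    rw [← hsum, sum_mul_eq_add_tsub hle]
    exact Nat.le_add_right _ _
  · intro hfβ
    refine (aperySet_subset_bset hgen.1 hpos hadd hfmax).antisymm fun s hs => ?_
    obtain ⟨lam, hle, rfl⟩ := mem_bset_iff.1 hs
    rw [hfβ, sum_mul_eq_add_tsub hle] at hfm
    exact hfm.of_add hadd (hgen.1.sum_mem _) (hgen.1.sum_mem _)

theorem betaRect_iff_frobenius (S : Set ℕ) {ν : ℕ} [NeZero ν] (g : Fin ν → ℕ) (hν : 2 ≤ ν)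
    (hS : IsNumSgp S) (hgen : MinimalGen S g) (hmono : StrictMono g)
    (hmpos : 0 < g 0) (hmul : ∀ s ∈ S, s ≠ 0 → g 0 ≤ s)
    (f : ℕ) (hf : f ∉ S) (hfmax : ∀ n, f < n → n ∈ S) :
    AperySet S (g 0) = Bset S (g 0) g ↔
      f + g 0 = ∑ i ∈ Finset.univ.erase 0, betaN S (g 0) g i * g i :=
  betaRect_iff_frobenius_general S g hS hgen hmono hmpos f hf hfmax
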